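/- arXiv:1502.04377 — 4 statements merged into one kernel-verified Lean document; each statement's English description precedes it below -/
import Mathlib

section
/- For every real t with 0 < |t| < 1/2, the series Σ_{n≥0} a(n)·tⁿ converges and its sum equals (1 − √(1 − 4t²)) / (2t²), where a(n) is the number of sequences w : Fin n → ℤ with every entry in {-1, 1}, all partial sums nonnegative, and total sum 0. -/
/-!
Reading `1` as an up-step and `-1` as a down-step identifies the counted sequences of length `n`
with the Dyck words of length `n`, so `a (2k)` is the Catalan number `C k` and `a (2k+1) = 0`.
The Cauchy product and Segner's recurrence give `x C(x)² + 1 = C(x)` for the Catalan generating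
function, i.e. `(1 - 2x C(x))² = 1 - 4x`. The continuous function `1 - 2x C(x)` equals `1` at
`0` and cannot vanish for `|x| < 1/4`, so it is the positive square root `√(1 - 4x)`.
-/

/-- The number of sequences `w : Fin n → ℤ` with every entry in `{-1, 1}`,
all partial sums `Σ_{j<i} w j` (for `i ≤ n`) nonnegative, and total sum `0`. -/
noncomputable def goodCount (n : ℕ) : ℕ :=
  Nat.card {w : Fin n → ℤ //
    (∀ i, w i = -1 ∨ w i = 1) ∧
    (∀ i : ℕ, i ≤ n → 0 ≤ ∑ j ∈ Finset.univ.filter (fun j : Fin n => (j : ℕ) < i), w j) ∧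
    (∑ j, w j) = 0}

open List DyckStep

def DyckStep.toInt : DyckStep → ℤ
  | U => 1
  | D => -1

def DyckStep.ofInt (z : ℤ) : DyckStep := if z = 1 then U else D

lemma DyckStep.ofInt_toInt (s : DyckStep) : ofInt s.toInt = s := by
  cases s <;> rfl

lemma DyckStep.toInt_ofInt {z : ℤ} (hz : z = -1 ∨ z = 1) : (ofInt z).toInt = z := by
  rcases hz with rfl | rfl <;> rfl

lemma DyckStep.toInt_eq_neg_one_or_eq_one (s : DyckStep) : s.toInt = -1 ∨ s.toInt = 1 := by
  cases s <;> simp [toInt]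

lemma List.sum_map_toInt (l : List DyckStep) : (l.map toInt).sum = l.count U - l.count D := by
  induction l with
  | nil => rfl
  | cons s l ih => cases s <;> simp [ih, toInt] <;> ring

lemma sum_filter_lt_toInt {n : ℕ} (f : Fin n → DyckStep) (i : ℕ) :
    ∑ j ∈ Finset.univ.filter (fun j : Fin n => (j : ℕ) < i), (f j).toInt =
      ((ofFn f).take i).count U - ((ofFn f).take i).count D := by
  rw [← sum_map_toInt, map_take, map_ofFn, sum_take_ofFn, Function.comp_def]

lemma List.ofFn_getElem_of_length_eq {α : Type*} {n : ℕ} {l : List α} (h : l.length = n) :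
    ofFn (fun j : Fin n => l[(j : ℕ)]'(j.2.trans_eq h.symm)) = l := by
  subst h
  exact ofFn_getElem

def IsBallotSequence (n : ℕ) (w : Fin n → ℤ) : Prop :=
  (∀ i, w i = -1 ∨ w i = 1) ∧
    (∀ i : ℕ, i ≤ n → 0 ≤ ∑ j ∈ Finset.univ.filter (fun j : Fin n => (j : ℕ) < i), w j) ∧
    (∑ j, w j) = 0

lemma isBallotSequence_toInt_comp_iff {n : ℕ} (f : Fin n → DyckStep) :
    IsBallotSequence n (toInt ∘ f) ↔ (ofFn f).count U = (ofFn f).count D ∧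
      ∀ i, ((ofFn f).take i).count D ≤ ((ofFn f).take i).count U := by
  have htotal : ∑ j, (f j).toInt = (ofFn f).count U - (ofFn f).count D := by
    rw [← sum_ofFn, ← sum_map_toInt, map_ofFn, Function.comp_def]
  simp only [IsBallotSequence, Function.comp_apply, sum_filter_lt_toInt, htotal,
    toInt_eq_neg_one_or_eq_one, implies_true, true_and]
  constructor
  · rintro ⟨hprefix, htot⟩
    refine ⟨by omega, fun i => ?_⟩
    rcases le_or_gt i n with hi | hi
    · linarith [hprefix i hi]
    · rw [take_of_length_le (by simp; omega)]
      omega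
  · rintro ⟨htot, hprefix⟩
    exact ⟨fun i _ => by linarith [hprefix i], by omega⟩

def IsBallotSequence.toDyckWord {n : ℕ} {w : Fin n → ℤ} (hw : IsBallotSequence n w) :
    DyckWord :=
  have hdyck := (isBallotSequence_toInt_comp_iff (ofInt ∘ w)).1 <| by
    convert hw using 1
    funext j
    exact toInt_ofInt (hw.1 j)
  ⟨ofFn (ofInt ∘ w), hdyck.1, hdyck.2⟩

def dyckWordEquiv (n : ℕ) :
    {p : DyckWord // p.toList.length = n} ≃ {w : Fin n → ℤ // IsBallotSequence n w} where
  toFun p := ⟨fun j => (p.1.toList[(j : ℕ)]'(j.2.trans_eq p.2.symm)).toInt,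
    (isBallotSequence_toInt_comp_iff _).2 <| by
      rw [ofFn_getElem_of_length_eq p.2]
      exact ⟨p.1.count_U_eq_count_D, p.1.count_D_le_count_U⟩⟩
  invFun w := ⟨w.2.toDyckWord, length_ofFn⟩
  left_inv p := by
    ext : 2
    simp only [IsBallotSequence.toDyckWord, Function.comp_def, ofInt_toInt]
    exact ofFn_getElem_of_length_eq p.2
  right_inv w := by
    ext j
    simp [IsBallotSequence.toDyckWord, toInt_ofInt (w.2.1 j)]

lemma goodCount_eq_card_dyckWord (n : ℕ) :
    goodCount n = Nat.card {p : DyckWord // p.toList.length = n} :=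
  (Nat.card_congr (dyckWordEquiv n)).symm

lemma goodCount_two_mul (k : ℕ) : goodCount (2 * k) = catalan k := by
  rw [goodCount_eq_card_dyckWord, ← DyckWord.card_dyckWord_semilength_eq_catalan,
    ← Nat.card_eq_fintype_card]
  exact Nat.card_congr <| Equiv.subtypeEquivRight fun p => by
    rw [← p.two_mul_semilength_eq_length]
    omega

lemma goodCount_two_mul_add_one (k : ℕ) : goodCount (2 * k + 1) = 0 := by
  rw [goodCount_eq_card_dyckWord, Nat.card_eq_zero]
  left
  constructor
  rintro ⟨p, hp⟩
  have := p.two_mul_semilength_eq_length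
  omega

lemma catalan_le_four_pow (n : ℕ) : catalan n ≤ 4 ^ n :=
  (catalan_eq_centralBinom_div n ▸ Nat.div_le_self _ _).trans (Nat.centralBinom_le_four_pow n)

noncomputable def catalanGF (x : ℝ) : ℝ := ∑' n, (catalan n : ℝ) * x ^ n

section CatalanGF

variable {x : ℝ}

lemma summable_norm_catalan_mul_pow (hx : |x| < 1 / 4) :
    Summable fun n => ‖(catalan n : ℝ) * x ^ n‖ := by
  refine .of_nonneg_of_le (fun _ => norm_nonneg _) (fun n => ?_)
    (summable_geometric_of_lt_one (by positivity) (by linarith : 4 * |x| < 1))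
  rw [norm_mul, norm_pow, Real.norm_natCast, Real.norm_eq_abs, mul_pow]
  gcongr
  exact_mod_cast catalan_le_four_pow n

lemma hasSum_catalanGF (hx : |x| < 1 / 4) :
    HasSum (fun n => (catalan n : ℝ) * x ^ n) (catalanGF x) :=
  (summable_norm_catalan_mul_pow hx).of_norm.hasSum

lemma catalanGF_sq_mul_add_one (hx : |x| < 1 / 4) : catalanGF x ^ 2 * x + 1 = catalanGF x := by
  have hsum := summable_norm_catalan_mul_pow hx
  have hsq : catalanGF x ^ 2 = ∑' n, (catalan (n + 1) : ℝ) * x ^ n := by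
    rw [sq, catalanGF, tsum_mul_tsum_eq_tsum_sum_antidiagonal_of_summable_norm hsum hsum]
    refine tsum_congr fun n => ?_
    rw [catalan_succ', Nat.cast_sum, Finset.sum_mul]
    refine Finset.sum_congr rfl fun kl hkl => ?_
    rw [← Finset.HasAntidiagonal.mem_antidiagonal.1 hkl, pow_add]
    push_cast
    ring
  rw [hsq, ← tsum_mul_right, catalanGF, hsum.of_norm.tsum_eq_zero_add, add_comm]
  simp only [catalan_zero, Nat.cast_one, pow_zero, mul_one, pow_succ, mul_assoc]

lemma one_sub_two_mul_catalanGF_sq (hx : |x| < 1 / 4) :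
    (1 - 2 * x * catalanGF x) ^ 2 = 1 - 4 * x := by
  linear_combination (4 * x) * catalanGF_sq_mul_add_one hx

lemma continuousOn_catalanGF {c : ℝ} (hc : |c| < 1 / 4) :
    ContinuousOn catalanGF (Set.Icc (-c) c) := by
  refine continuousOn_tsum (fun n => by fun_prop) (summable_norm_catalan_mul_pow hc)
    fun n y hy => ?_
  rw [norm_mul, norm_mul, norm_pow, norm_pow, Real.norm_eq_abs, Real.norm_eq_abs]
  gcongr
  exact (abs_le.2 hy).trans (le_abs_self c)

lemma two_mul_catalanGF_lt_one (hx : |x| < 1 / 4) : 2 * x * catalanGF x < 1 := by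
  by_contra! hge
  have hsub : Set.uIcc 0 x ⊆ Set.Icc (-|x|) |x| :=
    Set.uIcc_subset_Icc (by simp) ⟨neg_abs_le x, le_abs_self x⟩
  have hcont : ContinuousOn (fun y => 1 - 2 * y * catalanGF y) (Set.uIcc 0 x) := by
    have := (continuousOn_catalanGF (by rwa [abs_abs])).mono hsub
    fun_prop
  obtain ⟨z, hz, hz0⟩ : (0 : ℝ) ∈ (fun y => 1 - 2 * y * catalanGF y) '' Set.uIcc 0 x :=
    intermediate_value_uIcc hcont (Set.mem_uIcc.2 (.inr ⟨by linarith, by simp⟩))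
  have hz' : |z| < 1 / 4 := (abs_le.2 (hsub hz)).trans_lt hx
  have hsq := one_sub_two_mul_catalanGF_sq hz'
  rw [show 1 - 2 * z * catalanGF z = 0 from hz0] at hsq
  linarith [(abs_lt.1 hz').2]

theorem hasSum_catalan_mul_pow (hx0 : x ≠ 0) (hx : |x| < 1 / 4) :
    HasSum (fun n => (catalan n : ℝ) * x ^ n) ((1 - √(1 - 4 * x)) / (2 * x)) := by
  have hsqrt : √(1 - 4 * x) = 1 - 2 * x * catalanGF x := by
    rw [← one_sub_two_mul_catalanGF_sq hx,
      Real.sqrt_sq (by linarith [two_mul_catalanGF_lt_one hx])]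
  convert hasSum_catalanGF hx using 1
  rw [hsqrt]
  field_simp
  ring

end CatalanGF

theorem stmt1 (t : ℝ) (ht0 : 0 < |t|) (ht : |t| < 1 / 2) :
    HasSum (fun n : ℕ => (goodCount n : ℝ) * t ^ n)
      ((1 - Real.sqrt (1 - 4 * t ^ 2)) / (2 * t ^ 2)) := by
  have ht2 : |t ^ 2| < 1 / 4 := by
    rw [abs_pow]
    nlinarith [abs_nonneg t]
  have hcatalan := hasSum_catalan_mul_pow (pow_ne_zero 2 (abs_pos.1 ht0)) ht2
  have heven : HasSum (fun k => (goodCount (2 * k) : ℝ) * t ^ (2 * k))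
      ((1 - √(1 - 4 * t ^ 2)) / (2 * t ^ 2)) := by
    simpa only [goodCount_two_mul, pow_mul] using hcatalan
  have hodd : HasSum (fun k => (goodCount (2 * k + 1) : ℝ) * t ^ (2 * k + 1)) 0 := by
    simpa only [goodCount_two_mul_add_one, Nat.cast_zero, zero_mul] using hasSum_zero
  rw [← add_zero ((1 - √(1 - 4 * t ^ 2)) / (2 * t ^ 2))]
  exact heven.even_add_odd hodd
end

section
/- For every n ∈ ℕ, the number of sequences w : Fin (2n) → ℤ with every entry in {-1, 1}, all partial sums nonnegative, and total sum 0, multiplied by (n+1), equals the binomial coefficient C(2n, n). (Equivalently: for a fair coin, among all gambling histories of 2n rounds that break even, the proportion in which the gambler is never in debt is exactly 1/(n+1).) -/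
open DyckStep List

def toL {m : ℕ} (w : Fin m → ℤ) : List DyckStep := List.ofFn (fun i => if w i = 1 then U else D)

lemma toL_length {m : ℕ} (w : Fin m → ℤ) : (toL w).length = m := by simp [toL]

lemma count_UD (l : List DyckStep) : l.count U + l.count D = l.length := by
  induction l with
  | nil => simp
  | cons a t ih => cases a <;> simp [count_cons] at * <;> omega

lemma key {m : ℕ} (w : Fin m → ℤ) (hw : ∀ i, w i = -1 ∨ w i = 1) (i : ℕ) :
    (((toL w).take i).count U : ℤ) - ((toL w).take i).count D
      = ∑ j ∈ Finset.univ.filter (fun j : Fin m => (j : ℕ) < i), w j := by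
  induction i with
  | zero => simp
  | succ i ih =>
    by_cases hi : i < m
    · have hfilt : Finset.univ.filter (fun j : Fin m => (j : ℕ) < i + 1)
          = insert (⟨i, hi⟩ : Fin m) (Finset.univ.filter (fun j : Fin m => (j : ℕ) < i)) := by
        ext j; simp [Fin.ext_iff]; omega
      have hget : (toL w)[i]? = some (if w ⟨i, hi⟩ = 1 then U else D) := by
        rw [getElem?_eq_getElem (by rw [toL_length]; exact hi)]
        simp [toL]
      rw [hfilt, Finset.sum_insert (by simp), take_succ, hget]
      rcases hw ⟨i, hi⟩ with h1 | h1 <;>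
        simp [h1, count_append, ← ih] <;> ring
    · have hfilt : Finset.univ.filter (fun j : Fin m => (j : ℕ) < i + 1)
          = Finset.univ.filter (fun j : Fin m => (j : ℕ) < i) := by
        ext j; simp; omega
      have hn : (toL w)[i]? = none := by
        rw [getElem?_eq_none]; rw [toL_length]; omega
      rw [hfilt, take_succ, hn, ← ih]; simp

lemma filt_all {m : ℕ} {i : ℕ} (h : m ≤ i) :
    Finset.univ.filter (fun j : Fin m => (j : ℕ) < i) = Finset.univ := by
  ext j; simpa using lt_of_lt_of_le j.isLt h

def wOf {n : ℕ} (p : DyckWord) (hn : p.semilength = n) : Fin (2 * n) → ℤ :=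
  fun i => if p.toList[(i : ℕ)]'(by rw [← p.two_mul_semilength_eq_length, hn]; exact i.isLt) = U
    then 1 else -1

lemma wOf_eq {n : ℕ} (w : Fin (2 * n) → ℤ) (hw : ∀ i, w i = -1 ∨ w i = 1) (p : DyckWord)
    (hn : p.semilength = n) (h : p.toList = toL w) : wOf p hn = w := by
  funext i
  unfold wOf
  rcases hw i with h1 | h1 <;> simp [h, toL, h1]

lemma toL_wOf {n : ℕ} (p : DyckWord) (hn : p.semilength = n) : toL (wOf p hn) = p.toList := by
  have hl : p.toList.length = 2 * n := by rw [← p.two_mul_semilength_eq_length, hn]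
  apply List.ext_getElem (by simp [toL, hl])
  intro i h1 h2
  have : (toL (wOf p hn))[i] = if wOf p hn ⟨i, by omega⟩ = 1 then U else D := by
    simp [toL]
  rw [this, wOf]
  rcases (p.toList[i]'h2).dichotomy with h | h <;> simp [h]

def goodEquiv (n : ℕ) :
    {w : Fin (2 * n) → ℤ //
      (∀ i, w i = -1 ∨ w i = 1) ∧
      (∀ i : ℕ, i ≤ 2 * n → 0 ≤ ∑ j ∈ Finset.univ.filter (fun j : Fin (2 * n) => (j : ℕ) < i), w j) ∧
      (∑ j, w j) = 0} ≃ {p : DyckWord // p.semilength = n} where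
  toFun := fun ⟨w, hw, hnn, hsum⟩ => by
    have hbal : (toL w).count U = (toL w).count D := by
      have := key w hw (2 * n)
      rw [filt_all le_rfl, hsum, take_of_length_le (le_of_eq (toL_length w))] at this
      omega
    refine ⟨{ toList := toL w, count_U_eq_count_D := hbal, count_D_le_count_U := ?_ }, ?_⟩
    · intro i
      by_cases hi : i ≤ 2 * n
      · have := key w hw i
        have h2 := hnn i hi
        omega
      · rw [take_of_length_le (by rw [toL_length]; omega)]
        omega
    · show (toL w).count U = n
      have := count_UD (toL w)
      rw [toL_length] at this
      omega
  invFun := fun ⟨p, hn⟩ => by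
    refine ⟨wOf p hn, fun i => by unfold wOf; split <;> simp, ?_, ?_⟩
    · intro i hi
      have hw : ∀ j, wOf p hn j = -1 ∨ wOf p hn j = 1 := fun j => by
        unfold wOf; split <;> simp
      have := key (wOf p hn) hw i
      rw [toL_wOf] at this
      have h2 := p.count_D_le_count_U i
      omega
    · have hw : ∀ j, wOf p hn j = -1 ∨ wOf p hn j = 1 := fun j => by
        unfold wOf; split <;> simp
      have := key (wOf p hn) hw (2 * n)
      rw [toL_wOf, filt_all le_rfl,
        take_of_length_le (le_of_eq (by rw [← p.two_mul_semilength_eq_length, hn]))] at this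
      have h2 := p.count_U_eq_count_D
      omega
  left_inv := fun ⟨w, hw, hnn, hsum⟩ => by
    refine Subtype.ext (wOf_eq w hw _ ?_ rfl)
    show (toL w).count U = n
    have := key w hw (2 * n)
    rw [filt_all le_rfl, hsum, take_of_length_le (le_of_eq (toL_length w))] at this
    have h2 := count_UD (toL w)
    rw [toL_length] at h2
    omega
  right_inv := fun ⟨p, hn⟩ => by
    apply Subtype.ext
    apply DyckWord.ext
    exact toL_wOf p hn

theorem stmt4 (n : ℕ) : goodCount (2 * n) * (n + 1) = Nat.choose (2 * n) n := by
  have h1 : goodCount (2 * n) = catalan n := by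
    rw [goodCount, Nat.card_congr (goodEquiv n), Nat.card_eq_fintype_card,
      DyckWord.card_dyckWord_semilength_eq_catalan]
  rw [h1, mul_comm, succ_mul_catalan_eq_centralBinom, Nat.centralBinom]
end

section
/- The formal power series Σ_{n≥0} n!·tⁿ ∈ ℚ[[t]] is not algebraic over the polynomial ring ℚ[t]: there is no nonzero polynomial P with coefficients in ℚ[t] such that P(Σ_{n≥0} n!·tⁿ) = 0 in ℚ[[t]]. -/
/-!
The series `F = ∑ n! tⁿ` satisfies `t² F′ = (1 - t) F - 1`. If `P ∈ ℚ[t][Y]` is a nonzero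
annihilator of `F` of least degree `d`, differentiating `P(F) = 0` and eliminating `F′` gives
another annihilator of degree at most `d`, which by minimality is proportional to `P`. Comparing
the coefficients of `Y^(d-1)` shows that `g = -p / (d q)`, where `q, p` are the two top
coefficients of `P`, is a rational solution of `t² g′ = (1 - t) g - 1`, and comparing the
leading coefficients in `t` rules out such a solution.
-/

open Polynomial Differential

noncomputable instance {R : Type*} [CommRing R] : Differential R[X] :=
  ⟨derivative'.restrictScalars ℤ⟩

noncomputable instance {R : Type*} [CommRing R] : Differential (PowerSeries R) :=
  -- `Differential` is stated for the generic `ℤ`-algebra structure, which is not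
  -- reducibly equal to the one `PowerSeries` provides.
  letI := Ring.toIntAlgebra (PowerSeries R)
  ⟨(PowerSeries.derivative R).restrictScalars ℤ⟩

instance {R : Type*} [CommRing R] : DifferentialAlgebra R[X] (PowerSeries R) :=
  ⟨fun p => by
    simp only [PowerSeries.algebraMap_apply', Algebra.algebraMap_self, PowerSeries.map_id]
    exact PowerSeries.derivative_coe p⟩

@[simp]
theorem Polynomial.deriv_eq_derivative {R : Type*} [CommRing R] (p : R[X]) : p′ = derivative p :=
  rfl

@[simp]
theorem PowerSeries.deriv_eq_derivative {R : Type*} [CommRing R] (f : PowerSeries R) :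
    f′ = PowerSeries.derivative R f :=
  rfl

theorem PowerSeries.X_sq_mul_derivative_mk_factorial {R : Type*} [CommRing R] :
    X ^ 2 * PowerSeries.derivative R (mk fun n => (n.factorial : R))
      = (1 - X) * mk (fun n => (n.factorial : R)) - 1 := by
  ext n
  rcases n with _ | _ | n
  · simp
  · simp [coeff_X_pow_mul', sub_mul, coeff_succ_X_mul]
  · rw [show n + 1 + 1 = n + 2 by rfl, coeff_X_pow_mul]
    simp only [coeff_derivative, coeff_mk, Nat.factorial_succ, Nat.cast_mul, Nat.cast_add,
      Nat.cast_one, sub_mul, one_mul, map_sub, coeff_succ_X_mul, coeff_one, Nat.add_eq_zero_iff,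
      OfNat.ofNat_ne_zero, and_false, if_false, sub_zero]
    ring

theorem Polynomial.C_leadingCoeff_mul_eq_of_natDegree_le {A B : Type*} [CommRing A] [CommRing B]
    [Algebra A B] {f : B} {P Q : A[X]} (hP : aeval f P = 0)
    (hmin : ∀ R : A[X], R ≠ 0 → aeval f R = 0 → P.natDegree ≤ R.natDegree)
    (hQ : aeval f Q = 0) (hdeg : Q.natDegree ≤ P.natDegree) :
    C P.leadingCoeff * Q = C (Q.coeff P.natDegree) * P := by
  set R := C P.leadingCoeff * Q - C (Q.coeff P.natDegree) * P
  have hRf : aeval f R = 0 := by simp [R, hP, hQ]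
  have hRtop : R.coeff P.natDegree = 0 := by simp [R, mul_comm]
  have hRdeg : R.natDegree ≤ P.natDegree :=
    (natDegree_sub_le _ _).trans
      (max_le ((natDegree_C_mul_le _ _).trans hdeg) (natDegree_C_mul_le _ _))
  by_contra hne
  have hR0 : R ≠ 0 := sub_ne_zero.mpr hne
  have hlt : R.natDegree < P.natDegree := by
    refine lt_of_le_of_ne hRdeg fun h => hR0 ?_
    rwa [← leadingCoeff_eq_zero, leadingCoeff, h]
  exact hlt.not_ge (hmin R hR0 hRf)

namespace Differential

variable {A : Type*} [CommRing A] [Differential A]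

theorem coeff_C_mul_mapCoeffs_add_mul_derivative (a b c : A) (P : A[X]) (i : ℕ) :
    (C a * mapCoeffs P + (C b * X + C c) * derivative P).coeff i
      = a * (P.coeff i)′ + b * i * P.coeff i + c * (i + 1) * P.coeff (i + 1) := by
  rcases i with _ | i
  · simp [coeff_derivative, mul_coeff_zero]
  · simp only [add_mul, mul_assoc, coeff_add, coeff_C_mul, coeff_mapCoeffs, coeff_X_mul,
      coeff_derivative, Nat.cast_add, Nat.cast_one, one_mul]
    ring

variable {B : Type*} [CommRing B] [Differential B] [Algebra A B] [DifferentialAlgebra A B]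

theorem aeval_C_mul_mapCoeffs_add_mul_derivative {a : A} {v : A[X]} {f : B}
    (hf : algebraMap A B a * f′ = aeval f v) (P : A[X]) :
    aeval f (C a * mapCoeffs P + v * derivative P) = algebraMap A B a * (aeval f P)′ := by
  rw [deriv_aeval_eq, map_add, map_mul, map_mul, aeval_C, ← hf]
  ring

theorem _root_.IsAlgebraic.exists_mul_sub_eq_of_mul_deriv_eq {f : B} (halg : IsAlgebraic A f)
    (hinj : Function.Injective (algebraMap A B)) {a b c : A}
    (hf : algebraMap A B a * f′ = algebraMap A B b * f + algebraMap A B c) :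
    ∃ p q : A, q ≠ 0 ∧ ∃ d : ℕ, d ≠ 0 ∧
      a * (q * p′ - q′ * p) = b * p * q - c * d * q ^ 2 := by
  obtain ⟨P, ⟨hP0, hPf⟩, hmin⟩ :=
    (measure natDegree).wf.has_min {P : A[X] | P ≠ 0 ∧ aeval f P = 0} halg
  replace hmin : ∀ R : A[X], R ≠ 0 → aeval f R = 0 → P.natDegree ≤ R.natDegree :=
    fun R hR hRf => not_lt.mp (hmin R ⟨hR, hRf⟩)
  have hd : P.natDegree ≠ 0 := by
    intro hd
    rw [eq_C_of_natDegree_eq_zero hd, aeval_C, ← map_zero (algebraMap A B)] at hPf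
    exact hP0 (by rw [eq_C_of_natDegree_eq_zero hd, hinj hPf, map_zero])
  set Q := C a * mapCoeffs P + (C b * X + C c) * derivative P
  have hQf : aeval f Q = 0 := by
    rw [aeval_C_mul_mapCoeffs_add_mul_derivative (by simpa using hf), hPf, map_zero, mul_zero]
  have hcoeff : ∀ i, P.natDegree < i → P.coeff i = 0 :=
    fun _ hi => coeff_eq_zero_of_natDegree_lt hi
  have hQd : Q.natDegree ≤ P.natDegree := by
    refine natDegree_le_iff_coeff_eq_zero.mpr fun i hi => ?_
    rw [coeff_C_mul_mapCoeffs_add_mul_derivative, hcoeff i hi, hcoeff (i + 1) (by omega)]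
    simp
  have hprop := congrArg (coeff · (P.natDegree - 1))
    (C_leadingCoeff_mul_eq_of_natDegree_le hPf hmin hQf hQd)
  obtain ⟨e, he⟩ : ∃ e, P.natDegree = e + 1 := Nat.exists_eq_add_one.mpr (by omega)
  simp only [Q, coeff_C_mul, coeff_C_mul_mapCoeffs_add_mul_derivative, leadingCoeff, he,
    Nat.add_sub_cancel, hcoeff (e + 1 + 1) (by omega)] at hprop
  refine ⟨P.coeff e, P.leadingCoeff, leadingCoeff_ne_zero.mpr hP0, e + 1, e.succ_ne_zero, ?_⟩
  rw [leadingCoeff, he]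
  push_cast at hprop ⊢
  linear_combination hprop

end Differential

namespace Polynomial

variable {R : Type*} [CommRing R]

theorem coeff_derivative_mul_natDegree_add_sub_one (p q : R[X]) :
    (derivative p * q).coeff (p.natDegree + q.natDegree - 1)
      = p.natDegree * p.leadingCoeff * q.leadingCoeff := by
  rcases Nat.eq_zero_or_pos p.natDegree with h | h
  · simp [derivative_of_natDegree_zero h, h]
  · obtain ⟨a, ha⟩ : ∃ a, p.natDegree = a + 1 := Nat.exists_eq_add_one.mpr h
    have hp' : (derivative p).natDegree ≤ a := by simpa [ha] using p.natDegree_derivative_le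
    rw [show p.natDegree + q.natDegree - 1 = a + q.natDegree by omega,
      coeff_mul_add_eq_of_natDegree_le hp' le_rfl, coeff_derivative, ← ha, coeff_natDegree,
      coeff_natDegree, ha]
    push_cast
    ring

theorem coeff_X_sq_mul_wronskian (p q : R[X]) :
    (X ^ 2 * wronskian q p).coeff (p.natDegree + q.natDegree + 1)
      = (p.natDegree - q.natDegree : R) * p.leadingCoeff * q.leadingCoeff := by
  rcases Nat.eq_zero_or_pos (p.natDegree + q.natDegree) with h | h
  · rw [coeff_X_pow_mul', if_neg (by omega), show p.natDegree = 0 by omega,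
      show q.natDegree = 0 by omega]
    simp
  · rw [show p.natDegree + q.natDegree + 1 = p.natDegree + q.natDegree - 1 + 2 by omega,
      coeff_X_pow_mul, wronskian, coeff_sub, mul_comm q, coeff_derivative_mul_natDegree_add_sub_one,
      add_comm p.natDegree, coeff_derivative_mul_natDegree_add_sub_one]
    ring

theorem natDegree_X_sq_mul_wronskian_le (p q : R[X]) :
    (X ^ 2 * wronskian q p).natDegree ≤ p.natDegree + q.natDegree + 1 := by
  by_cases hw : wronskian q p = 0
  · simp [hw]
  · have := natDegree_wronskian_lt_add hw
    calc (X ^ 2 * wronskian q p).natDegree ≤ 2 + (wronskian q p).natDegree :=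
          natDegree_mul_le_of_le (natDegree_X_pow_le 2) le_rfl
      _ ≤ p.natDegree + q.natDegree + 1 := by omega

theorem X_sq_mul_wronskian_ne [IsDomain R] [CharZero R] (p : R[X]) {q : R[X]} (hq : q ≠ 0)
    {n : ℕ} (hn : n ≠ 0) :
    X ^ 2 * wronskian q p ≠ (1 - X) * (p * q) + (n : R[X]) * q ^ 2 := by
  intro h
  rcases eq_or_ne p 0 with rfl | hp
  · simp [eq_comm, hn, hq] at h
  set a := p.natDegree
  set b := q.natDegree
  set E := X ^ 2 * wronskian q p - (1 - X) * (p * q)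
  have hE : E = C (n : R) * q ^ 2 := by simp only [E, h, C_eq_natCast]; ring
  have hpq : (p * q).natDegree = a + b := natDegree_mul hp hq
  have hEdeg : E.natDegree ≤ a + b + 1 := by
    refine (natDegree_sub_le _ _).trans (max_le (natDegree_X_sq_mul_wronskian_le p q) ?_)
    exact (natDegree_mul_le_of_le (by compute_degree) hpq.le).trans_eq (add_comm _ _)
  have hEtop : E.coeff (a + b + 1) = (a + 1 - b : R) * p.leadingCoeff * q.leadingCoeff := by
    rw [coeff_sub, coeff_X_sq_mul_wronskian, sub_mul (1 : R[X]), one_mul, coeff_sub, coeff_X_mul,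
      ← hpq, coeff_natDegree, leadingCoeff_mul, coeff_eq_zero_of_natDegree_lt (by omega)]
    ring
  have hn' : (n : R) ≠ 0 := Nat.cast_ne_zero.mpr hn
  have hEnat : E.natDegree = b + b := by
    rw [hE, natDegree_C_mul hn', natDegree_pow, two_mul]
  have hElead : E.leadingCoeff ≠ 0 := by
    rw [hE, leadingCoeff_mul, leadingCoeff_C, leadingCoeff_pow]
    exact mul_ne_zero hn' (pow_ne_zero _ (leadingCoeff_ne_zero.mpr hq))
  have hlc : p.leadingCoeff * q.leadingCoeff ≠ 0 :=
    mul_ne_zero (leadingCoeff_ne_zero.mpr hp) (leadingCoeff_ne_zero.mpr hq)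
  rcases Nat.lt_or_ge b (a + 1) with hba | hba
  · have h0 : E.coeff (a + b + 1) = 0 := coeff_eq_zero_of_natDegree_lt (by omega)
    rw [hEtop, mul_assoc] at h0
    have hcast : ((a + 1 - b : ℕ) : R) = a + 1 - b := by push_cast [Nat.cast_sub hba.le]; ring
    exact mul_ne_zero (hcast ▸ Nat.cast_ne_zero.mpr (by omega)) hlc h0
  · have hb : b = a + 1 := by omega
    apply hElead
    rw [leadingCoeff, hEnat, show b + b = a + b + 1 by omega, hEtop, hb]
    push_cast
    ring

end Polynomial

theorem stmt18 :
    ¬ IsAlgebraic (Polynomial ℚ)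
        (PowerSeries.mk (fun n => (Nat.factorial n : ℚ)) : PowerSeries ℚ) := by
  intro halg
  set F : PowerSeries ℚ := PowerSeries.mk fun n => (n.factorial : ℚ)
  have hode : algebraMap ℚ[X] _ (X ^ 2) * F′
      = algebraMap ℚ[X] _ (1 - X) * F + algebraMap ℚ[X] (PowerSeries ℚ) (-1) := by
    simpa [PowerSeries.algebraMap_apply', sub_eq_add_neg] using
      PowerSeries.X_sq_mul_derivative_mk_factorial (R := ℚ)
  obtain ⟨p, q, hq, d, hd, h⟩ := halg.exists_mul_sub_eq_of_mul_deriv_eq (coe_injective ℚ) hode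
  simp only [deriv_eq_derivative] at h
  exact X_sq_mul_wronskian_ne p hq hd (by rw [wronskian]; linear_combination h)
end

section
/- Every algebraic formal power series is D-finite: if f ∈ ℚ[[t]] is algebraic over ℚ[t] (i.e., there is a nonzero polynomial P with coefficients in ℚ[t] with P(f) = 0), then there exist L ∈ ℕ and polynomials r₀, r₁, …, r_L ∈ ℚ[t], not all zero, such that Σ_{i=0}^{L} rᵢ(t)·f⁽ⁱ⁾(t) = 0 in ℚ[[t]], where f⁽ⁱ⁾ denotes the i-th formal derivative of f. -/
/-!
Write `g = d • f` with `d ≠ 0` and `g` integral, let `P` be its minimal polynomial, of degree `n`,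
and `A = ℚ[t][g]`, a free `ℚ[t]`-module of rank `n`. Differentiating `P(g) = 0` shows that
`P'(g) · D g ∈ A`, so for `k = d · P'(g)`, which is nonzero because `P` is separable in
characteristic zero, the operator `k · D` maps `A` into itself. Induction then gives
`k ^ (2i + 1) · Dⁱ f ∈ A`, hence `k ^ (2n + 1) · Dⁱ f ∈ A` for `i ≤ n`. These `n + 1` elements of a
module of rank `n` are linearly dependent, and `k ^ (2n + 1)` cancels in the domain `ℚ[[t]]`.
-/

open Polynomial

namespace Derivation

variable {R B : Type*} [CommRing R] [CommRing B] [Algebra R B] (D : Derivation R B B)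

theorem mul_apply_pow_self (k : B) (n : ℕ) : k * D (k ^ n) = n * (k ^ n * D k) := by
  rcases n with _ | n
  · simp
  · rw [leibniz_pow, nsmul_eq_mul, smul_eq_mul, Nat.add_sub_cancel, pow_succ]
    ring

theorem pow_mul_iterate_mem {σ : Type*} [SetLike σ B] [SubringClass σ B] {A : σ} {k x : B}
    (hk : k ∈ A) (hkD : ∀ a ∈ A, k * D a ∈ A) {m : ℕ} (hx : k ^ m * x ∈ A) (i : ℕ) :
    k ^ (m + 2 * i) * D^[i] x ∈ A := by
  induction i with
  | zero => simpa using hx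
  | succ i ih =>
    set y := k ^ (m + 2 * i) * D^[i] x
    -- applying `k ^ 2 * D` raises the exponent by two; differentiating the power costs only `k * D k ∈ A`
    have hy : k ^ (m + 2 * (i + 1)) * D^[i + 1] x =
        k * (k * D y) - (m + 2 * i : ℕ) * (k * D k) * y := by
      have hpow := D.mul_apply_pow_self k (m + 2 * i)
      rw [Function.iterate_succ_apply', D.leibniz, smul_eq_mul, smul_eq_mul]
      linear_combination (-(k * D^[i] x)) * hpow
    rw [hy]
    exact sub_mem (mul_mem hk (hkD _ ih)) (mul_mem (mul_mem (natCast_mem A _) (hkD _ hk)) ih)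

variable {S : Type*} [CommRing S] [Algebra S B]

theorem mul_apply_mem_adjoin_singleton {g k : B}
    (hS : ∀ s, k * D (algebraMap S B s) ∈ Algebra.adjoin S {g})
    (hg : k * D g ∈ Algebra.adjoin S {g}) :
    ∀ a ∈ Algebra.adjoin S {g}, k * D a ∈ Algebra.adjoin S {g} := by
  intro a ha
  induction ha using Algebra.adjoin_induction with
  | mem x hx => rwa [Set.mem_singleton_iff.mp hx]
  | algebraMap s => exact hS s
  | add x y _ _ hx hy => simpa only [map_add, mul_add] using add_mem hx hy
  | mul x y hx' hy' hx hy =>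
    have hxy : k * D (x * y) = x * (k * D y) + y * (k * D x) := by
      rw [D.leibniz, smul_eq_mul, smul_eq_mul]
      ring
    rw [hxy]
    exact add_mem (mul_mem hx' hy) (mul_mem hy' hx)

theorem apply_aeval_sub_mem {A : Subalgebra S B} (hD : ∀ s, D (algebraMap S B s) ∈ A) {g : B}
    (hg : g ∈ A) (P : S[X]) : D (aeval g P) - aeval g (derivative P) * D g ∈ A := by
  induction P using Polynomial.induction_on' with
  | add P Q hP hQ =>
    simpa only [map_add, derivative_add, add_mul, add_sub_add_comm] using add_mem hP hQ
  | monomial n s =>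
    have h : D (aeval g (monomial n s)) - aeval g (derivative (monomial n s)) * D g =
        g ^ n * D (algebraMap S B s) := by
      rcases n with _ | n
      · simp
      · simp only [aeval_monomial, derivative_monomial, leibniz, leibniz_pow, map_mul,
          _root_.map_natCast, smul_eq_mul, nsmul_eq_mul, Nat.add_sub_cancel]
        ring
    rw [h]
    exact mul_mem (pow_mem hg n) (hD s)

end Derivation

theorem aeval_derivative_minpoly_ne_zero {S B : Type*} [CommRing S] [IsDomain S]
    [IsIntegrallyClosed S] [CharZero S] [CommRing B] [IsDomain B] [Algebra S B]
    [Module.IsTorsionFree S B] {g : B} (hg : IsIntegral S g) :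
    aeval g (derivative (minpoly S g)) ≠ 0 := fun h => by
  have hn : (minpoly S g).natDegree ≠ 0 := (minpoly.natDegree_pos hg).ne'
  exact (natDegree_derivative_lt hn).not_ge <|
    natDegree_le_of_dvd (minpoly.isIntegrallyClosed_dvd hg h) (derivative_ne_zero.2 hn)

theorem Subalgebra.not_linearIndependent_of_mul_mem {S B ι : Type*} [CommRing S] [Nontrivial S]
    [CommRing B] [IsDomain B] [Algebra S B] [Fintype ι] (A : Subalgebra S B) [Module.Finite S A]
    (hcard : Module.finrank S A < Fintype.card ι) {c : B} (hc : c ≠ 0) {v : ι → B}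
    (hv : ∀ i, c * v i ∈ A) : ¬ LinearIndependent S v := fun hli => by
  have hmul : LinearIndependent S fun i => c * v i :=
    hli.map' (LinearMap.mulLeft S c) (LinearMap.ker_eq_bot.2 (mul_right_injective₀ hc))
  have hA : LinearIndependent S fun i => (⟨c * v i, hv i⟩ : A) :=
    .of_comp A.val.toLinearMap hmul
  exact hcard.not_ge hA.fintype_card_le_finrank

theorem IsAlgebraic.exists_not_linearIndependent_iterate_derivation {R S B : Type*} [CommRing R]
    [CommRing S] [IsDomain S] [IsIntegrallyClosed S] [CharZero S] [CommRing B] [IsDomain B]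
    [Algebra R B] [Algebra S B] [Module.IsTorsionFree S B] (D : Derivation R B B)
    (hD : ∀ s, D (algebraMap S B s) ∈ (⊥ : Subalgebra S B)) {x : B} (hx : IsAlgebraic S x) :
    ∃ n, ¬ LinearIndependent S fun i : Fin (n + 1) => D^[i] x := by
  obtain ⟨d, hd, hint⟩ := hx.exists_integral_multiple
  set g := d • x
  set A := Algebra.adjoin S {g}
  set h := aeval g (derivative (minpoly S g))
  set k := algebraMap S B d * h
  have hDA : ∀ s, D (algebraMap S B s) ∈ A := fun s => bot_le (a := A) (hD s)
  have hgA : g ∈ A := Algebra.self_mem_adjoin_singleton S g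
  have hkA : k ∈ A := mul_mem (A.algebraMap_mem d) (aeval_mem_adjoin_singleton S g)
  have hk0 : k ≠ 0 := mul_ne_zero
    ((map_ne_zero_iff _ (FaithfulSMul.algebraMap_injective S B)).2 hd)
    (aeval_derivative_minpoly_ne_zero hint)
  have hhDg : h * D g ∈ A := by
    simpa only [minpoly.aeval, map_zero, zero_sub, neg_mem_iff] using
      D.apply_aeval_sub_mem hDA hgA (minpoly S g)
  have hkD : ∀ a ∈ A, k * D a ∈ A := D.mul_apply_mem_adjoin_singleton
    (fun s => mul_mem hkA (hDA s)) (by rw [mul_assoc]; exact mul_mem (A.algebraMap_mem d) hhDg)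
  have hkx : k ^ 1 * x ∈ A := by
    have hkx' : k * x = h * g := by simp only [k, g, Algebra.smul_def]; ring
    rw [pow_one, hkx']
    exact mul_mem (aeval_mem_adjoin_singleton S g) hgA
  let pb := Algebra.adjoin.powerBasis' hint
  have : Module.Finite S A := .of_basis pb.basis
  set n := (minpoly S g).natDegree
  refine ⟨n, A.not_linearIndependent_of_mul_mem ?_ (pow_ne_zero (1 + 2 * n) hk0) fun i => ?_⟩
  · rw [pb.finrank, Algebra.adjoin.powerBasis'_dim, Fintype.card_fin]
    exact n.lt_succ_self
  · have hi : 1 + 2 * n = 2 * (n - i) + (1 + 2 * i) := by omega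
    rw [hi, pow_add, mul_assoc]
    exact mul_mem (pow_mem hkA _) (D.pow_mul_iterate_mem hkA hkD hkx i)

theorem stmt19 (f : PowerSeries ℚ) (hf : IsAlgebraic (Polynomial ℚ) f) :
    ∃ (L : ℕ) (r : Fin (L + 1) → Polynomial ℚ), (∃ i, r i ≠ 0) ∧
      ∑ i : Fin (L + 1), (r i : PowerSeries ℚ) *
        (⇑(PowerSeries.derivative ℚ))^[(i : ℕ)] f = 0 := by
  have : Module.IsTorsionFree ℚ[X] (PowerSeries ℚ) :=
    Module.isTorsionFree_iff_algebraMap_injective.2 (Polynomial.coe_injective ℚ)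
  obtain ⟨L, hL⟩ := hf.exists_not_linearIndependent_iterate_derivation (PowerSeries.derivative ℚ)
    fun p => Algebra.mem_bot.2 ⟨derivative p, (PowerSeries.derivative_coe p).symm⟩
  obtain ⟨r, hr, i, hi⟩ := Fintype.not_linearIndependent_iff.1 hL
  exact ⟨L, r, ⟨i, hi⟩, by simpa [Algebra.smul_def, PowerSeries.algebraMap_apply'] using hr⟩
end
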